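/- Let F ⊆ [0,1] be a Lebesgue measurable set of positive Lebesgue measure and let γ₀ : [0,1] → ℝ² be the curve γ₀(t) = (t, 0). Then there exists δ > 0 such that every C¹ curve ρ : [0,1] → ℝ² satisfying sup_{t∈[0,1]}‖ρ(t) − γ₀(t)‖ + sup_{t∈[0,1]}‖ρ'(t) − γ₀'(t)‖ < δ has the property that {t ∈ [0,1] : ρ(t) ∈ F × ℝ} has positive Lebesgue measure. -/

import Mathlib

open Set MeasureTheory Metric Topology

noncomputable section

/-- The horizontal unit segment `γ₀(t) = (t, 0)` in the Euclidean plane. -/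
def horizSeg : ℝ → EuclideanSpace ℝ (Fin 2) := fun t => !₂[t, 0]

/-- The (constant) derivative `(1, 0)` of the horizontal segment. -/
def horizSegDeriv : EuclideanSpace ℝ (Fin 2) := !₂[1, 0]

lemma coord_abs_le_norm (v : EuclideanSpace ℝ (Fin 2)) (i : Fin 2) : |v i| ≤ ‖v‖ := by
  rw [EuclideanSpace.norm_eq, ← Real.sqrt_sq_eq_abs]
  apply Real.sqrt_le_sqrt
  calc (v i) ^ 2 = ‖v i‖ ^ 2 := by rw [Real.norm_eq_abs, sq_abs]
    _ ≤ ∑ j, ‖v j‖ ^ 2 := Finset.single_le_sum (f := fun j => ‖v j‖ ^ 2) (fun j _ => sq_nonneg _) (Finset.mem_univ i)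

lemma continuous_horizSeg : Continuous horizSeg := by
  have : horizSeg = fun t : ℝ => t • (!₂[1, 0] : EuclideanSpace ℝ (Fin 2)) := by
    funext t
    ext i
    fin_cases i <;> simp [horizSeg]
  rw [this]
  exact continuous_id.smul continuous_const

/-- If `F ⊆ [0,1]` is measurable with positive Lebesgue measure, then
there is `δ > 0` such that every `C¹` curve `ρ : [0,1] → ℝ²` with
`sup_t ‖ρ(t) − γ₀(t)‖ + sup_t ‖ρ'(t) − γ₀'(t)‖ < δ` (where `γ₀(t) = (t,0)`) spends a set
of times of positive Lebesgue measure in `F × ℝ`. -/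
theorem posMeasure_near_horizontal {F : Set ℝ} (hFmeas : MeasurableSet F)
    (hFsub : F ⊆ Icc (0:ℝ) 1) (hFpos : 0 < volume F) :
    ∃ δ > 0, ∀ ρ : ℝ → EuclideanSpace ℝ (Fin 2), ContDiffOn ℝ 1 ρ (Icc 0 1) →
      (⨆ t : Icc (0:ℝ) 1, ‖ρ t - horizSeg t‖) +
        (⨆ t : Icc (0:ℝ) 1, ‖derivWithin ρ (Icc 0 1) t - horizSegDeriv‖) < δ →
      0 < volume {t ∈ Icc (0:ℝ) 1 | (ρ t) 0 ∈ F} := by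
  have hfin : volume F ≤ 1 := by
    calc volume F ≤ volume (Icc (0:ℝ) 1) := measure_mono hFsub
      _ = 1 := by simp [Real.volume_Icc]
  have hne : volume F ≠ ⊤ := (lt_of_le_of_lt hfin ENNReal.one_lt_top).ne
  set m := (volume F).toReal with hm
  have hmpos : 0 < m := ENNReal.toReal_pos hFpos.ne' hne
  set δ := min (1/2 : ℝ) (m/8) with hδdef
  have hδpos : 0 < δ := lt_min (by norm_num) (by positivity)
  have hδhalf : δ ≤ 1/2 := min_le_left _ _
  refine ⟨δ, hδpos, fun ρ hρ hsup => ?_⟩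
  have h01 : (0:ℝ) ∈ Icc (0:ℝ) 1 := by norm_num
  have h11 : (1:ℝ) ∈ Icc (0:ℝ) 1 := by norm_num
  have hc1 : ContinuousOn ρ (Icc 0 1) := hρ.continuousOn
  have hc2 : ContinuousOn (derivWithin ρ (Icc 0 1)) (Icc 0 1) :=
    hρ.continuousOn_derivWithin (uniqueDiffOn_Icc one_pos) le_rfl
  -- boundedness of the two sup families
  have hcont1 : Continuous (fun t : Icc (0:ℝ) 1 => ‖ρ t - horizSeg t‖) :=
    (hc1.restrict.sub (continuous_horizSeg.comp continuous_subtype_val)).norm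
  have hcont2 : Continuous
      (fun t : Icc (0:ℝ) 1 => ‖derivWithin ρ (Icc 0 1) t - horizSegDeriv‖) :=
    (hc2.restrict.sub continuous_const).norm
  have hbdd1 : BddAbove (range fun t : Icc (0:ℝ) 1 => ‖ρ t - horizSeg t‖) :=
    (isCompact_range hcont1).bddAbove
  have hbdd2 : BddAbove
      (range fun t : Icc (0:ℝ) 1 => ‖derivWithin ρ (Icc 0 1) t - horizSegDeriv‖) :=
    (isCompact_range hcont2).bddAbove
  have hS1nonneg : 0 ≤ ⨆ t : Icc (0:ℝ) 1, ‖ρ t - horizSeg t‖ :=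
    le_trans (norm_nonneg _) (le_ciSup hbdd1 ⟨0, h01⟩)
  have hS2nonneg : 0 ≤ ⨆ t : Icc (0:ℝ) 1, ‖derivWithin ρ (Icc 0 1) t - horizSegDeriv‖ :=
    le_trans (norm_nonneg _) (le_ciSup hbdd2 ⟨0, h01⟩)
  have h1 : ∀ t ∈ Icc (0:ℝ) 1, ‖ρ t - horizSeg t‖ < δ := by
    intro t ht
    calc ‖ρ t - horizSeg t‖ ≤ ⨆ s : Icc (0:ℝ) 1, ‖ρ s - horizSeg s‖ := le_ciSup hbdd1 ⟨t, ht⟩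
      _ ≤ _ + _ := le_add_of_nonneg_right hS2nonneg
      _ < δ := hsup
  have h2 : ∀ t ∈ Icc (0:ℝ) 1, ‖derivWithin ρ (Icc 0 1) t - horizSegDeriv‖ < δ := by
    intro t ht
    calc ‖derivWithin ρ (Icc 0 1) t - horizSegDeriv‖
        ≤ ⨆ s : Icc (0:ℝ) 1, ‖derivWithin ρ (Icc 0 1) s - horizSegDeriv‖ := le_ciSup hbdd2 ⟨t, ht⟩
      _ ≤ _ + _ := le_add_of_nonneg_left hS1nonneg
      _ < δ := hsup
  -- the first coordinate function
  set f : ℝ → ℝ := fun t => ρ t 0 with hf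
  have hfderiv : ∀ t ∈ Icc (0:ℝ) 1,
      HasDerivWithinAt f (derivWithin ρ (Icc 0 1) t 0) (Icc 0 1) t := by
    intro t ht
    have hd : HasDerivWithinAt ρ (derivWithin ρ (Icc 0 1) t) (Icc 0 1) t :=
      ((hρ.differentiableOn one_ne_zero) t ht).hasDerivWithinAt
    exact (EuclideanSpace.proj (0 : Fin 2)).hasFDerivAt.comp_hasDerivWithinAt t hd
  -- derivative bound
  have hgbound : ∀ t ∈ Icc (0:ℝ) 1, |derivWithin ρ (Icc 0 1) t 0 - 1| < δ := by
    intro t ht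
    have : derivWithin ρ (Icc 0 1) t 0 - 1
        = (derivWithin ρ (Icc 0 1) t - horizSegDeriv) 0 := by
      simp [horizSegDeriv]
    rw [this]
    exact lt_of_le_of_lt (coord_abs_le_norm _ 0) (h2 t ht)
  -- Lipschitz with constant 1+δ
  have hLip : LipschitzOnWith (Real.toNNReal (1 + δ)) f (Icc 0 1) := by
    apply (convex_Icc (0:ℝ) 1).lipschitzOnWith_of_nnnorm_hasDerivWithin_le hfderiv
    intro t ht
    rw [← NNReal.coe_le_coe]
    simp only [coe_nnnorm, Real.norm_eq_abs, Real.coe_toNNReal', max_eq_left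
      (by positivity : (0:ℝ) ≤ 1 + δ)]
    have := hgbound t ht
    have habs := abs_sub_abs_le_abs_sub (derivWithin ρ (Icc 0 1) t 0) 1
    simp only [abs_one] at habs
    linarith
  -- endpoint estimates
  have hend : ∀ t ∈ Icc (0:ℝ) 1, |f t - t| < δ := by
    intro t ht
    have : f t - t = (ρ t - horizSeg t) 0 := by simp [horizSeg, f]
    rw [this]
    exact lt_of_le_of_lt (coord_abs_le_norm _ 0) (h1 t ht)
  have hf0 : f 0 < δ := by have := hend 0 h01; rw [abs_lt] at this; linarith [this.2]
  have hf1 : 1 - δ < f 1 := by have := hend 1 h11; rw [abs_lt] at this; linarith [this.1]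
  have hcontf : ContinuousOn f (Icc 0 1) :=
    (EuclideanSpace.proj (0 : Fin 2)).continuous.comp_continuousOn hc1
  have hIVT : Icc (f 0) (f 1) ⊆ f '' Icc 0 1 :=
    intermediate_value_Icc (by norm_num) hcontf
  set A := {t ∈ Icc (0:ℝ) 1 | f t ∈ F} with hA
  have hsub : F ∩ Icc δ (1 - δ) ⊆ f '' A := by
    rintro y ⟨hyF, hyδ, hyδ'⟩
    obtain ⟨t, ht, hft⟩ := hIVT ⟨le_of_lt (lt_of_lt_of_le hf0 hyδ),
      le_of_lt (lt_of_le_of_lt hyδ' hf1)⟩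
    exact ⟨t, ⟨ht, by rw [hft]; exact hyF⟩, hft⟩
  -- conclude by contradiction
  by_contra hzero
  push_neg at hzero
  have hA0 : volume A = 0 := le_antisymm hzero zero_le
  have hLipA : LipschitzOnWith (Real.toNNReal (1 + δ)) f A :=
    hLip.mono (fun t ht => ht.1)
  have himg : volume (f '' A) = 0 := by
    have h := hLipA.hausdorffMeasure_image_le (d := 1) zero_le_one
    rw [hausdorffMeasure_real] at h
    rw [hA0, mul_zero] at h
    simpa using le_antisymm (by simpa using h) zero_le
  have hFI0 : volume (F ∩ Icc δ (1 - δ)) = 0 := measure_mono_null hsub himg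
  have hcompl : F \ Icc δ (1 - δ) ⊆ Icc 0 δ ∪ Icc (1 - δ) 1 := by
    rintro x ⟨hxF, hxI⟩
    have hx01 := hFsub hxF
    rcases lt_or_ge x δ with h | h
    · exact Or.inl ⟨hx01.1, h.le⟩
    · exact Or.inr ⟨by by_contra hc; push_neg at hc; exact hxI ⟨h, hc.le⟩, hx01.2⟩
  have hsplit : volume F ≤ volume (F ∩ Icc δ (1 - δ)) + volume (F \ Icc δ (1 - δ)) :=
    measure_le_inter_add_diff _ _ _
  have hsmall : volume (F \ Icc δ (1 - δ)) ≤ ENNReal.ofReal (2 * δ) := by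
    calc volume (F \ Icc δ (1 - δ)) ≤ volume (Icc (0:ℝ) δ ∪ Icc (1 - δ) 1) :=
        measure_mono hcompl
      _ ≤ volume (Icc (0:ℝ) δ) + volume (Icc (1 - δ) 1) := measure_union_le _ _
      _ = ENNReal.ofReal δ + ENNReal.ofReal δ := by
          rw [Real.volume_Icc, Real.volume_Icc]
          norm_num
      _ = ENNReal.ofReal (2 * δ) := by
          rw [← ENNReal.ofReal_add hδpos.le hδpos.le]; ring_nf
  have hlt : ENNReal.ofReal (2 * δ) < volume F := by
    have h2δ : 2 * δ ≤ m / 4 := by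
      have := min_le_right (1/2 : ℝ) (m/8)
      linarith [this]
    calc ENNReal.ofReal (2 * δ) ≤ ENNReal.ofReal (m / 4) := ENNReal.ofReal_le_ofReal h2δ
      _ < ENNReal.ofReal m := ENNReal.ofReal_lt_ofReal_iff hmpos |>.2 (by linarith)
      _ = volume F := by rw [hm, ENNReal.ofReal_toReal hne]
  have : volume F < volume F :=
    lt_of_le_of_lt (by rw [hFI0, zero_add] at hsplit; exact hsplit.trans hsmall) hlt
  exact absurd this (lt_irrefl _)

end
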